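/- Let R be an affine domain over a field k with trdeg_k R = 1 and let φ be a nontrivial exponential map on R. If k̃ denotes the algebraic closure of k in R, then R is a polynomial ring in one variable over k̃ and R^φ = k̃. -/

import Mathlib

open Polynomial

/-- An exponential map on a `k`-algebra `R`: a `k`-algebra homomorphism `φ : R → R[W]`
with `ε₀ ∘ φ = id` and the coassociativity condition `φ_T φ_W = φ_{W+T}`. -/
def IsExponentialMap {k R : Type*} [CommRing k] [CommRing R] [Algebra k R]
    (φ : R →ₐ[k] Polynomial R) : Prop :=
  (∀ a : R, (φ a).eval 0 = a) ∧
  (∀ a : R, (φ a).map φ.toRingHom =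
      (φ a).eval₂ (C.comp C) (Polynomial.X + Polynomial.C Polynomial.X))

/-!
An element of `R[W]` that is integral over `k` is constant, so `R^φ` contains `k̃`. Conversely, a
transcendental invariant `a` would make a non-invariant `b` algebraic over `k[a] ⊆ R^φ`;
applying `φ` to the relation gives a nonzero polynomial with constant coefficients vanishing at
the nonconstant `φ b`. Hence `R^φ = k̃`, and its nonzero elements are units.

Coassociativity says that `φ` maps the `i`-th coefficient of `φ a` to the `i`-th Hasse derivative
of `φ a`. So leading coefficients are invariant, and if `m` is the `W`-degree of some `φ a`, so is
every `j ≤ m` with `m.choose j ≠ 0` in `R`. By Lucas's theorem the least positive degree `n` is a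
power of `char R` (it is `1` in characteristic zero) and divides every degree. For `g` of degree
`n`, subtracting `c g^q` with `c ∈ R^φ` lowers degrees, whence `R = k̃[g]`.
-/

theorem Nat.not_dvd_choose_ordProj {p n : ℕ} (hp : p.Prime) (hn : n ≠ 0) :
    ¬ p ∣ n.choose (ordProj[p] n) := by
  have := Fact.mk hp
  have h := Choose.choose_pow_mul_pow_mul_modEq_choose_nat (p := p) (k := n.factorization p)
    (a := ordCompl[p] n) (b := 1)
  rw [Nat.ordProj_mul_ordCompl_eq_self, mul_one, Nat.choose_one_right] at h
  rw [h.dvd_iff dvd_rfl]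
  exact Nat.not_dvd_ordCompl hp hn

theorem Polynomial.hasseDeriv_map {R S : Type*} [Semiring R] [Semiring S] (f : R →+* S)
    (p : R[X]) (n : ℕ) : hasseDeriv n (p.map f) = (hasseDeriv n p).map f := by
  ext i
  simp only [hasseDeriv_coeff, coeff_map, map_mul, map_natCast]

theorem Polynomial.natDegree_sub_lt_of_leadingCoeff_eq {R : Type*} [Ring R] {p q : R[X]}
    (hp : 0 < p.natDegree) (hpq : p.natDegree = q.natDegree)
    (hlc : p.leadingCoeff = q.leadingCoeff) : (p - q).natDegree < p.natDegree := by
  have hp0 : p ≠ 0 := ne_zero_of_natDegree_gt hp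
  by_cases hpq0 : p - q = 0
  · rwa [hpq0, natDegree_zero]
  refine natDegree_lt_natDegree hpq0 (degree_sub_lt_left ?_ hp0 hlc)
  rw [degree_eq_natDegree hp0, degree_eq_natDegree (ne_zero_of_natDegree_gt (hpq ▸ hp)), hpq]

theorem isAlgebraic_adjoin_singleton_of_transcendental {k R : Type*} [CommRing k] [CommRing R]
    [Algebra k R] (htr2 : ∀ f : Fin 2 → R, ¬ AlgebraicIndependent k f) {a : R}
    (ha : Transcendental k a) (b : R) : IsAlgebraic (Algebra.adjoin k {a}) b := by
  have hone : AlgebraicIndependent k fun _ : Unit => a :=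
    algebraicIndependent_unique_type_iff.mpr ha
  by_contra hb
  have hadjoin : Algebra.adjoin k (Set.range fun _ : Unit => a) = Algebra.adjoin k {a} := by
    rw [Set.range_const]
  have hpair := (hone.option_iff_transcendental b).mpr (by rw [hadjoin]; exact hb)
  exact htr2 _ (hpair.comp ![none, some ()] (by decide))

namespace IsExponentialMap

section CommRing

variable {k R : Type*} [CommRing k] [CommRing R] [Algebra k R] {φ : R →ₐ[k] R[X]}

variable (φ) in
noncomputable def invariants : Subalgebra k R := AlgHom.equalizer φ CAlgHom

theorem mem_invariants {a : R} : a ∈ invariants φ ↔ φ a = C a := AlgHom.mem_equalizer _ _ _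

theorem coeff_zero (hφ : IsExponentialMap φ) (a : R) : (φ a).coeff 0 = a := by
  rw [coeff_zero_eq_eval_zero, hφ.1]

theorem map_coeff (hφ : IsExponentialMap φ) (a : R) (i : ℕ) :
    φ ((φ a).coeff i) = hasseDeriv i (φ a) := by
  have h := congrArg (coeff · i) (hφ.2 a)
  simp only [coeff_map] at h
  rw [AlgHom.toRingHom_eq_coe, RingHom.coe_coe] at h
  rw [h, ← eval₂_map, ← comp, ← taylor_apply, taylor_coeff, hasseDeriv_map, eval_map, eval₂_C_X]

theorem eq_C_of_natDegree_eq_zero (hφ : IsExponentialMap φ) {a : R} (h : (φ a).natDegree = 0) :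
    φ a = C a := by
  rw [Polynomial.eq_C_of_natDegree_eq_zero h, hφ.coeff_zero]

theorem leadingCoeff_mem_invariants (hφ : IsExponentialMap φ) (a : R) :
    (φ a).leadingCoeff ∈ invariants φ := by
  rw [mem_invariants, leadingCoeff, hφ.map_coeff, hasseDeriv_natDegree_eq_C, leadingCoeff]

section Domain

variable [IsDomain R]

theorem exists_natDegree_eq (hφ : IsExponentialMap φ) {a : R} {j : ℕ}
    (hj0 : 0 < j) (hj : j ≤ (φ a).natDegree) (hchoose : ((φ a).natDegree.choose j : R) ≠ 0) :
    ∃ b : R, (φ b).natDegree = j := by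
  set m := (φ a).natDegree
  refine ⟨(φ a).coeff (m - j), le_antisymm ?_ (le_natDegree_of_ne_zero ?_)⟩
  · have := natDegree_hasseDeriv_le (φ a) (m - j)
    rwa [Nat.sub_sub_self hj, ← hφ.map_coeff] at this
  · rw [hφ.map_coeff, hasseDeriv_coeff, Nat.add_sub_cancel' hj, Nat.choose_symm hj]
    exact mul_ne_zero hchoose (leadingCoeff_ne_zero.mpr (ne_zero_of_natDegree_gt (hj0.trans_le hj)))

theorem eq_C_of_isUnit (hφ : IsExponentialMap φ) {u : R} (hu : IsUnit u) : φ u = C u :=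
  hφ.eq_C_of_natDegree_eq_zero (natDegree_eq_zero_of_isUnit (hu.map φ))

theorem integralClosure_le_invariants (hφ : IsExponentialMap φ) :
    integralClosure k R ≤ invariants φ := by
  intro a ⟨p, hp, hpa⟩
  have hcomp : (p.map (algebraMap k R)).comp (φ a) = 0 := by
    rw [comp, eval₂_map, ← algebraMap_eq, ← IsScalarTower.algebraMap_eq, ← aeval_def,
      aeval_algHom_apply, aeval_def, hpa, map_zero]
  rcases comp_eq_zero_iff.mp hcomp with h | ⟨-, h⟩
  · exact absurd h (hp.map _).ne_zero
  · rw [mem_invariants, h, hφ.coeff_zero]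

theorem aeval_ne_zero_of_le_invariants (hφ : IsExponentialMap φ) {S : Subalgebra k R}
    (hS : S ≤ invariants φ) {b : R} (hb : φ b ≠ C b) {Q : S[X]} (hQ : Q ≠ 0) :
    aeval b Q ≠ 0 := by
  intro hQb
  have hφS : (φ : R →+* R[X]).comp (algebraMap S R) = C.comp (algebraMap S R) :=
    RingHom.ext fun x => mem_invariants.mp (hS x.2)
  have hcomp : (Q.map (algebraMap S R)).comp (φ b) = 0 := by
    rw [comp, eval₂_map, ← hφS, ← RingHom.coe_coe φ, ← hom_eval₂, ← aeval_def, hQb, map_zero]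
  rcases comp_eq_zero_iff.mp hcomp with h | ⟨-, h⟩
  · exact hQ (map_injective _ Subtype.val_injective (by rw [h, Polynomial.map_zero]))
  · exact hb (by rw [h, hφ.coeff_zero])

theorem exists_natDegree_dvd (hφ : IsExponentialMap φ) (hnt : ∃ a : R, φ a ≠ C a) :
    ∃ g : R, 0 < (φ g).natDegree ∧ ∀ a : R, (φ g).natDegree ∣ (φ a).natDegree := by
  classical
  have hD : ∃ n, 0 < n ∧ ∃ g : R, (φ g).natDegree = n := by
    obtain ⟨b, hb⟩ := hnt
    exact ⟨_, Nat.pos_of_ne_zero fun h => hb (hφ.eq_C_of_natDegree_eq_zero h), b, rfl⟩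
  set n := Nat.find hD
  obtain ⟨hn, g, hg⟩ : 0 < n ∧ ∃ g : R, (φ g).natDegree = n := Nat.find_spec hD
  refine ⟨g, hg ▸ hn, fun a => ?_⟩
  obtain ⟨p, _⟩ := CharP.exists R
  have hchar := CharP.char_is_prime_or_zero R p
  -- `m.choose (ordProj[p] m)` is prime to `p` (Lucas; `ordProj[0] m = 1`), so `ordProj[p]` of a
  -- degree is a degree
  have hmin : ∀ b : R, 0 < (φ b).natDegree → n ≤ ordProj[p] (φ b).natDegree := by
    intro b hb
    refine Nat.find_min' hD ⟨Nat.ordProj_pos _ p, hφ.exists_natDegree_eq (Nat.ordProj_pos _ p)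
      (Nat.ordProj_le p hb.ne') ?_⟩
    rw [Ne, CharP.cast_eq_zero_iff R p]
    rcases hchar with hp | rfl
    · exact Nat.not_dvd_choose_ordProj hp hb.ne'
    · simpa using hb.ne'
  rw [hg]
  rcases (φ a).natDegree.eq_zero_or_pos with h0 | ha
  · rw [h0]
    exact dvd_zero n
  rcases hchar with hp | rfl
  · have hn_pow : n = ordProj[p] n := le_antisymm (hg ▸ hmin g (hg ▸ hn)) (Nat.ordProj_le p hn.ne')
    have hle := hmin a ha
    rw [hn_pow, Nat.pow_le_pow_iff_right hp.one_lt] at hle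
    rw [hn_pow]
    exact (pow_dvd_pow p hle).trans (Nat.ordProj_dvd _ p)
  · have : n ≤ 1 := by simpa using hmin a ha
    rw [show n = 1 by omega]
    exact one_dvd _

theorem exists_natDegree_sub_lt (hφ : IsExponentialMap φ)
    (hunit : ∀ u ∈ invariants φ, u ≠ 0 → IsUnit u) {g a : R} (hg : 0 < (φ g).natDegree)
    (ha : 0 < (φ a).natDegree) (hdvd : (φ g).natDegree ∣ (φ a).natDegree) :
    ∃ c ∈ invariants φ, ∃ q : ℕ, (φ (a - c * g ^ q)).natDegree < (φ a).natDegree := by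
  obtain ⟨q, hq⟩ := hdvd
  have hlg : (φ g).leadingCoeff ^ q ≠ 0 :=
    pow_ne_zero q (leadingCoeff_ne_zero.mpr (ne_zero_of_natDegree_gt hg))
  obtain ⟨v, hv⟩ := (hunit _ (pow_mem (hφ.leadingCoeff_mem_invariants g) q) hlg).exists_right_inv
  set c := (φ a).leadingCoeff * v
  have hc : c ∈ invariants φ := mul_mem (hφ.leadingCoeff_mem_invariants a)
    (mem_invariants.mpr (hφ.eq_C_of_isUnit (.of_mul_eq_one_right _ hv)))
  have hc0 : c ≠ 0 := mul_ne_zero (leadingCoeff_ne_zero.mpr (ne_zero_of_natDegree_gt ha))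
    (right_ne_zero_of_mul_eq_one hv)
  have hφcg : φ (c * g ^ q) = C c * φ g ^ q := by rw [map_mul, map_pow, mem_invariants.mp hc]
  refine ⟨c, hc, q, ?_⟩
  rw [map_sub]
  refine natDegree_sub_lt_of_leadingCoeff_eq ha ?_ ?_
  · rw [hφcg, natDegree_C_mul hc0, natDegree_pow, hq, mul_comm]
  · rw [hφcg, leadingCoeff_mul, leadingCoeff_C, leadingCoeff_pow, mul_assoc, mul_comm v, hv,
      mul_one]

theorem bijective_aeval (hφ : IsExponentialMap φ) (hunit : ∀ u ∈ invariants φ, u ≠ 0 → IsUnit u)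
    {g : R} (hg : 0 < (φ g).natDegree) (hdvd : ∀ a : R, (φ g).natDegree ∣ (φ a).natDegree) :
    Function.Bijective (aeval g : (invariants φ)[X] →ₐ[invariants φ] R) := by
  refine ⟨(injective_iff_map_eq_zero _).mpr fun p hp => ?_, fun a => ?_⟩
  · by_contra hp0
    have hgC : φ g ≠ C g := fun h => hg.ne' (by rw [h, natDegree_C])
    exact hφ.aeval_ne_zero_of_le_invariants le_rfl hgC hp0 hp
  induction h : (φ a).natDegree using Nat.strong_induction_on generalizing a with
  | _ m ih =>
    rcases m.eq_zero_or_pos with rfl | hm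
    · exact ⟨C ⟨a, mem_invariants.mpr (hφ.eq_C_of_natDegree_eq_zero h)⟩, aeval_C _ _⟩
    obtain ⟨c, hc, q, hlt⟩ := hφ.exists_natDegree_sub_lt hunit hg (h ▸ hm) (hdvd a)
    obtain ⟨p, hp⟩ := ih _ (h ▸ hlt) (a - c * g ^ q) rfl
    exact ⟨p + C ⟨c, hc⟩ * X ^ q, by simp [hp]⟩

end Domain

end CommRing

section Field

variable {k R : Type*} [Field k] [CommRing R] [IsDomain R] [Algebra k R] {φ : R →ₐ[k] R[X]}

theorem invariants_eq_integralClosure (hφ : IsExponentialMap φ)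
    (htr2 : ∀ f : Fin 2 → R, ¬ AlgebraicIndependent k f) (hnt : ∃ a : R, φ a ≠ C a) :
    invariants φ = integralClosure k R := by
  refine le_antisymm (fun a ha => ?_) hφ.integralClosure_le_invariants
  by_contra hint
  obtain ⟨b, hb⟩ := hnt
  obtain ⟨P, hP0, hPb⟩ := isAlgebraic_adjoin_singleton_of_transcendental htr2
    (fun halg => hint halg.isIntegral) b
  exact hφ.aeval_ne_zero_of_le_invariants (Algebra.adjoin_le (Set.singleton_subset_iff.mpr ha))
    hb hP0 hPb

end Field

end IsExponentialMap

theorem stmt19_general {k R : Type*} [Field k] [CommRing R] [IsDomain R] [Algebra k R]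
    (htr2 : ∀ f : Fin 2 → R, ¬ AlgebraicIndependent k f)
    (φ : R →ₐ[k] Polynomial R) (hφ : IsExponentialMap φ)
    (hnt : ∃ a : R, φ a ≠ Polynomial.C a) :
    (∃ g : R,
      Function.Bijective fun p : Polynomial ↥(integralClosure k R) =>
        Polynomial.eval₂ (algebraMap ↥(integralClosure k R) R) g p) ∧
    (∀ a : R, φ a = Polynomial.C a ↔ a ∈ integralClosure k R) := by
  have hinv := hφ.invariants_eq_integralClosure htr2 hnt
  obtain ⟨g, hg, hdvd⟩ := hφ.exists_natDegree_dvd hnt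
  have hunit : ∀ u ∈ IsExponentialMap.invariants φ, u ≠ 0 → IsUnit u := fun u hu hu0 =>
    (show u ∈ integralClosure k R by rwa [← hinv]).isUnit hu0
  have hbij := hφ.bijective_aeval hunit hg hdvd
  rw [hinv] at hbij
  exact ⟨⟨g, hbij⟩, fun a => by rw [← IsExponentialMap.mem_invariants, hinv]⟩

/-- If `R` is an affine domain of transcendence degree one over `k` admitting a nontrivial
exponential map `φ`, and `k̃` is the algebraic closure of `k` in `R` (= `integralClosure k R`
since `k` is a field), then `R` is a polynomial ring in one variable over `k̃` and
`R^φ = k̃`. -/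
theorem stmt19 {k R : Type*} [Field k] [CommRing R] [IsDomain R] [Algebra k R]
    [Algebra.FiniteType k R]
    (htr1 : ∃ a : R, Transcendental k a)
    (htr2 : ∀ f : Fin 2 → R, ¬ AlgebraicIndependent k f)
    (φ : R →ₐ[k] Polynomial R) (hφ : IsExponentialMap φ)
    (hnt : ∃ a : R, φ a ≠ Polynomial.C a) :
    (∃ g : R,
      Function.Bijective fun p : Polynomial ↥(integralClosure k R) =>
        Polynomial.eval₂ (algebraMap ↥(integralClosure k R) R) g p) ∧
    (∀ a : R, φ a = Polynomial.C a ↔ a ∈ integralClosure k R) :=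
  stmt19_general htr2 φ hφ hnt
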